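/- Let C be a finite set partitioned into parts 𝒦_C (at least 2 parts), and for parts A ≠ B let w⁺(A,B) ∈ [0, |A|·|B|] be symmetric nonnegative reals. For distinct parts K, K' define W(K,K') := ∑_{K'' ∈ 𝒦_C \ {K,K'}} |K''|·(w⁺(K,K'')/(|K||K''|))·(w⁺(K',K'')/(|K'||K''|)) + w⁺(K,K')/|K| + w⁺(K',K)/|K'|. Then W(K,K') ≥ w⁺(K, C\K)/|K| + w⁺(K', C\K')/|K'| − |C| + |K| + |K'|, where w⁺(K, C\K) := ∑_{K'' ≠ K} w⁺(K,K''). -/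

import Mathlib

/-!
Write `x_i = w(K,i)/(|K||i|)` and `y_i = w(K',i)/(|K'||i|)`; the bounds on `w` give
`x_i, y_i ≤ 1`, hence `x_i y_i ≥ x_i + y_i - 1` because `(1 - x_i)(1 - y_i) ≥ 0`.
Multiplying by `|i|` and summing over the parts `i ≠ K, K'` gives the claim, since those
parts have total size `|C| - |K| - |K'|` and the two missing terms of `w⁺(K, C\K)` and
`w⁺(K', C\K')` are `w(K,K')` and `w(K',K)`.
-/

open Finset

lemma add_sub_one_le_mul {x y : ℝ} (hx : x ≤ 1) (hy : y ≤ 1) : x + y - 1 ≤ x * y := by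
  nlinarith [mul_nonneg (sub_nonneg.2 hx) (sub_nonneg.2 hy)]

lemma div_add_div_sub_le_mul_div_mul_div {a b c u v : ℝ} (ha : 0 < a) (hb : 0 < b)
    (hc : 0 < c) (hu : u ≤ a * c) (hv : v ≤ b * c) :
    u / a + v / b - c ≤ c * (u / (a * c)) * (v / (b * c)) := by
  have hx : u / (a * c) ≤ 1 := (div_le_one (by positivity)).2 hu
  have hy : v / (b * c) ≤ 1 := (div_le_one (by positivity)).2 hv
  calc u / a + v / b - c = c * (u / (a * c) + v / (b * c) - 1) := by
        field_simp
    _ ≤ c * (u / (a * c) * (v / (b * c))) :=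
        mul_le_mul_of_nonneg_left (add_sub_one_le_mul hx hy) hc.le
    _ = c * (u / (a * c)) * (v / (b * c)) := by ring

lemma Finset.sum_eq_add_add_sum_erase_erase {ι M : Type*} [DecidableEq ι] [AddCommMonoid M]
    {s : Finset ι} {i j : ι} (hi : i ∈ s) (hj : j ∈ s) (hij : i ≠ j) (f : ι → M) :
    ∑ l ∈ s, f l = f i + f j + ∑ l ∈ (s.erase i).erase j, f l := by
  rw [← add_sum_erase s f hi, ← add_sum_erase _ f (mem_erase.2 ⟨hij.symm, hj⟩), add_assoc]

theorem stmt_18_general {ι : Type*} [DecidableEq ι] (P : Finset ι)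
    (k : ι → ℕ) (hk : ∀ i ∈ P, 1 ≤ k i) (N : ℕ) (htotal : ∑ i ∈ P, k i = N)
    (w : ι → ι → ℝ)
    (hw1 : ∀ i ∈ P, ∀ j ∈ P, i ≠ j → w i j ≤ (k i : ℝ) * (k j : ℝ)) :
    ∀ K ∈ P, ∀ K' ∈ P, K ≠ K' →
      (∑ K'' ∈ (P.erase K).erase K',
          (k K'' : ℝ) * (w K K'' / ((k K : ℝ) * (k K'' : ℝ)))
            * (w K' K'' / ((k K' : ℝ) * (k K'' : ℝ))))
          + w K K' / (k K : ℝ) + w K' K / (k K' : ℝ)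
        ≥ (∑ K'' ∈ P.erase K, w K K'') / (k K : ℝ)
            + (∑ K'' ∈ P.erase K', w K' K'') / (k K' : ℝ)
            - (N : ℝ) + (k K : ℝ) + (k K' : ℝ) := by
  intro K hK K' hK' hne
  have hpos : ∀ i ∈ P, (0 : ℝ) < k i := fun i hi => by exact_mod_cast hk i hi
  have hpointwise := sum_le_sum fun i (hi : i ∈ (P.erase K).erase K') => by
    obtain ⟨hiK', hiK, hiP⟩ : i ≠ K' ∧ i ≠ K ∧ i ∈ P := by simpa using hi
    exact div_add_div_sub_le_mul_div_mul_div (hpos K hK) (hpos K' hK') (hpos i hiP)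
      (hw1 K hK i hiP hiK.symm) (hw1 K' hK' i hiP hiK'.symm)
  have hN : (N : ℝ) = k K + k K' + ∑ i ∈ (P.erase K).erase K', (k i : ℝ) := by
    rw [← htotal, Nat.cast_sum, sum_eq_add_add_sum_erase_erase hK hK' hne]
  have hwK := add_sum_erase _ (w K) (mem_erase.2 ⟨hne.symm, hK'⟩)
  have hwK' := add_sum_erase _ (w K') (mem_erase.2 ⟨hne, hK⟩)
  rw [erase_right_comm] at hwK'
  rw [sum_sub_distrib, sum_add_distrib, ← sum_div, ← sum_div] at hpointwise
  rw [← hwK, ← hwK', hN, add_div, add_div]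
  linarith

/-- Main inequality chain of Lemma 4.9: W(K,K') is at least
w⁺(K,C\K)/|K| + w⁺(K',C\K')/|K'| − |C| + |K| + |K'|. -/
theorem stmt_18 {ι : Type*} [DecidableEq ι] (P : Finset ι) (hm : 2 ≤ P.card)
    (k : ι → ℕ) (hk : ∀ i ∈ P, 1 ≤ k i) (N : ℕ) (htotal : ∑ i ∈ P, k i = N)
    (w : ι → ι → ℝ) (hsymm : ∀ i j, w i j = w j i)
    (hw0 : ∀ i ∈ P, ∀ j ∈ P, i ≠ j → 0 ≤ w i j)
    (hw1 : ∀ i ∈ P, ∀ j ∈ P, i ≠ j → w i j ≤ (k i : ℝ) * (k j : ℝ)) :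
    ∀ K ∈ P, ∀ K' ∈ P, K ≠ K' →
      (∑ K'' ∈ (P.erase K).erase K',
          (k K'' : ℝ) * (w K K'' / ((k K : ℝ) * (k K'' : ℝ)))
            * (w K' K'' / ((k K' : ℝ) * (k K'' : ℝ))))
          + w K K' / (k K : ℝ) + w K' K / (k K' : ℝ)
        ≥ (∑ K'' ∈ P.erase K, w K K'') / (k K : ℝ)
            + (∑ K'' ∈ P.erase K', w K' K'') / (k K' : ℝ)
            - (N : ℝ) + (k K : ℝ) + (k K' : ℝ) :=
  stmt_18_general P k hk N htotal w hw1
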